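/- Let q be real with 0 < q < 1, and fix a, b, c, d, e ∈ ℂ with d, e ∉ {q^{−j} : j ∈ ℕ}. Let f : ℂ × ℂ → ℂ be analytic in a neighborhood U of (0,0) ∈ ℂ², and suppose that for all (x,y) ∈ U, x·[f(x,y) − f(x,qy) − (d+e)q^{−1}(f(x,qy) − f(x,q²y)) + de·q^{−2}(f(x,q²y) − f(x,q³y))] = y·[(f(x,y) − f(qx,y)) − (a+b+c)(f(x,qy) − f(qx,qy)) + (ab+ac+bc)(f(x,q²y) − f(qx,q²y)) − abc(f(x,q³y) − f(qx,q³y))]. Let g : ℂ → ℂ be g(x) = f(x,0). Then there is a neighborhood V ⊆ U of (0,0) such that for all (x,y) ∈ V with x ≠ 0, the series ∑_{n=0}^∞ ((a,b,c;q)_n/((q;q)_n (d,e;q)_n)) · y^n · (D_q^n g)(x) converges to f(x,y). -/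

import Mathlib

/-! For fixed `x`, expand the slice `y ↦ f (x, y) = ∑ Aₙ(x) yⁿ` on a polydisc. Substituting into the
q-difference equation and comparing the coefficients of `yⁿ⁺¹` gives
`x (1 - qⁿ⁺¹)(1 - d qⁿ)(1 - e qⁿ) Aₙ₊₁(x) = (1 - a qⁿ)(1 - b qⁿ)(1 - c qⁿ) (Aₙ(x) - Aₙ(q x))`,
i.e. `Aₙ₊₁ = (1 - a qⁿ)(1 - b qⁿ)(1 - c qⁿ) / ((1 - qⁿ⁺¹)(1 - d qⁿ)(1 - e qⁿ)) · D_q Aₙ`.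
Since `A₀ = g`, induction gives `Aₙ = (a, b, c; q)ₙ / (q, d, e; q)ₙ · D_qⁿ g` for `x ≠ 0`. -/

noncomputable def qPoch (q a : ℂ) (n : ℕ) : ℂ := ∏ j ∈ Finset.range n, (1 - a * q ^ j)

noncomputable def qDeriv (q : ℂ) (g : ℂ → ℂ) : ℂ → ℂ := fun x => (g x - g (q * x)) / x

open Metric FormalMultilinearSeries
open scoped NNReal

lemma hasFPowerSeriesOnBall_ofScalars_of_hasSum {R : ℝ≥0} (hR : 0 < R) {A : ℕ → ℂ}
    {S : ℂ → ℂ} (hA : ∀ y : ℂ, ‖y‖ < R → HasSum (fun n => A n * y ^ n) (S y)) :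
    HasFPowerSeriesOnBall S (ofScalars ℂ A) 0 R where
  r_le := by
    refine ENNReal.le_of_forall_nnreal_lt fun r hr => ?_
    have hrR : ‖((r : ℝ) : ℂ)‖ < R := by simpa using hr
    refine (ofScalars ℂ A).le_radius_of_tendsto (l := 0) ?_
    simpa [ofScalars_norm] using (hA _ hrR).summable.tendsto_atTop_zero.norm
  r_pos := by exact_mod_cast hR
  hasSum {y} hy := by
    rw [eball_coe, mem_ball_zero_iff] at hy
    simpa [ofScalars_apply_eq, mul_comm] using hA y hy

lemma coeff_eq_of_hasSum {R : ℝ≥0} (hR : 0 < R) {A B : ℕ → ℂ} {S : ℂ → ℂ}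
    (hA : ∀ y : ℂ, ‖y‖ < R → HasSum (fun n => A n * y ^ n) (S y))
    (hB : ∀ y : ℂ, ‖y‖ < R → HasSum (fun n => B n * y ^ n) (S y)) (n : ℕ) : A n = B n := by
  have h := HasFPowerSeriesAt.eq_formalMultilinearSeries
    (hasFPowerSeriesOnBall_ofScalars_of_hasSum hR hA).hasFPowerSeriesAt
    (hasFPowerSeriesOnBall_ofScalars_of_hasSum hR hB).hasFPowerSeriesAt
  simpa using congrArg (coeff · n) h

lemma coeff_succ_eq_of_hasSum {R : ℝ≥0} (hR : 0 < R) {A B : ℕ → ℂ} {S : ℂ → ℂ}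
    (hA : ∀ y : ℂ, ‖y‖ < R → HasSum (fun n => A n * y ^ n) (S y))
    (hB : ∀ y : ℂ, ‖y‖ < R → HasSum (fun n => B n * y ^ (n + 1)) (S y)) (n : ℕ) :
    A (n + 1) = B n := by
  let B' : ℕ → ℂ := fun | 0 => 0 | m + 1 => B m
  have hB' : ∀ y : ℂ, ‖y‖ < R → HasSum (fun n => B' n * y ^ n) (S y) := fun y hy =>
    (hasSum_nat_add_iff' 1).mp (by simpa [B'] using hB y hy)
  exact coeff_eq_of_hasSum hR hA hB' (n + 1)

section QShift

variable {R : ℝ≥0} {q : ℂ} {α β : ℕ → ℂ} {F G : ℂ → ℂ}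

lemma norm_pow_mul_lt (hq : ‖q‖ ≤ 1) (k : ℕ) {y : ℂ} (hy : ‖y‖ < R) : ‖q ^ k * y‖ < R := by
  rw [norm_mul, norm_pow]
  exact (mul_le_of_le_one_left (norm_nonneg y) (pow_le_one₀ (norm_nonneg q) hq)).trans_lt hy

lemma hasSum_qShift (hF : ∀ y : ℂ, ‖y‖ < R → HasSum (fun n => α n * y ^ n) (F y))
    (hq : ‖q‖ ≤ 1) (k : ℕ) {y : ℂ} (hy : ‖y‖ < R) :
    HasSum (fun n => α n * (q ^ k) ^ n * y ^ n) (F (q ^ k * y)) := by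
  simpa only [mul_pow, mul_assoc] using hF _ (norm_pow_mul_lt hq k hy)

-- The coefficient factors because `1 - (d + e) q⁻¹ t + d e q⁻² t² = (1 - d q⁻¹ t)(1 - e q⁻¹ t)`.
lemma hasSum_qDiffEq_lhs (hF : ∀ y : ℂ, ‖y‖ < R → HasSum (fun n => α n * y ^ n) (F y))
    (hq : ‖q‖ ≤ 1) (x d e : ℂ) {y : ℂ} (hy : ‖y‖ < R) :
    HasSum (fun n =>
        x * α n * ((1 - q ^ n) * (1 - d * q ^ n * q⁻¹) * (1 - e * q ^ n * q⁻¹)) * y ^ n)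
      (x * ((F y - F (q * y)) - (d + e) * q⁻¹ * (F (q * y) - F (q ^ 2 * y))
        + d * e * q⁻¹ ^ 2 * (F (q ^ 2 * y) - F (q ^ 3 * y)))) := by
  have h0 := hasSum_qShift hF hq 0 hy
  have h1 := hasSum_qShift hF hq 1 hy
  have h2 := hasSum_qShift hF hq 2 hy
  have h3 := hasSum_qShift hF hq 3 hy
  simp only [pow_zero, one_mul, one_pow, mul_one, pow_one] at h0 h1
  refine ((((h0.sub h1).sub ((h1.sub h2).mul_left ((d + e) * q⁻¹))).add
    ((h2.sub h3).mul_left (d * e * q⁻¹ ^ 2))).mul_left x).congr_fun fun n => by ring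

lemma hasSum_qDiffEq_rhs (hF : ∀ y : ℂ, ‖y‖ < R → HasSum (fun n => α n * y ^ n) (F y))
    (hG : ∀ y : ℂ, ‖y‖ < R → HasSum (fun n => β n * y ^ n) (G y))
    (hq : ‖q‖ ≤ 1) (a b c : ℂ) {y : ℂ} (hy : ‖y‖ < R) :
    HasSum (fun n => (α n - β n) * ((1 - a * q ^ n) * (1 - b * q ^ n) * (1 - c * q ^ n)) *
        y ^ (n + 1))
      (y * ((F y - G y) - (a + b + c) * (F (q * y) - G (q * y))
        + (a * b + a * c + b * c) * (F (q ^ 2 * y) - G (q ^ 2 * y))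
        - a * b * c * (F (q ^ 3 * y) - G (q ^ 3 * y)))) := by
  have h0 := (hasSum_qShift hF hq 0 hy).sub (hasSum_qShift hG hq 0 hy)
  have h1 := (hasSum_qShift hF hq 1 hy).sub (hasSum_qShift hG hq 1 hy)
  have h2 := (hasSum_qShift hF hq 2 hy).sub (hasSum_qShift hG hq 2 hy)
  have h3 := (hasSum_qShift hF hq 3 hy).sub (hasSum_qShift hG hq 3 hy)
  simp only [pow_zero, one_mul, one_pow, mul_one, pow_one] at h0 h1
  refine (((h0.sub (h1.mul_left (a + b + c))).add (h2.mul_left (a * b + a * c + b * c))).sub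
    (h3.mul_left (a * b * c))).mul_left y |>.congr_fun fun n => by ring

end QShift

lemma coeff_succ_recurrence {R : ℝ≥0} (hR : 0 < R) {q x a b c d e : ℂ} (hq0 : q ≠ 0)
    (hq : ‖q‖ ≤ 1) {α β : ℕ → ℂ} {F G : ℂ → ℂ}
    (hF : ∀ y : ℂ, ‖y‖ < R → HasSum (fun n => α n * y ^ n) (F y))
    (hG : ∀ y : ℂ, ‖y‖ < R → HasSum (fun n => β n * y ^ n) (G y))
    (heq : ∀ y : ℂ, ‖y‖ < R →
      x * ((F y - F (q * y)) - (d + e) * q⁻¹ * (F (q * y) - F (q ^ 2 * y))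
        + d * e * q⁻¹ ^ 2 * (F (q ^ 2 * y) - F (q ^ 3 * y)))
      = y * ((F y - G y) - (a + b + c) * (F (q * y) - G (q * y))
        + (a * b + a * c + b * c) * (F (q ^ 2 * y) - G (q ^ 2 * y))
        - a * b * c * (F (q ^ 3 * y) - G (q ^ 3 * y)))) (n : ℕ) :
    x * α (n + 1) * ((1 - q * q ^ n) * (1 - d * q ^ n) * (1 - e * q ^ n))
      = (α n - β n) * ((1 - a * q ^ n) * (1 - b * q ^ n) * (1 - c * q ^ n)) := by
  have h := coeff_succ_eq_of_hasSum hR (fun y hy => hasSum_qDiffEq_lhs hF hq x d e hy)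
    (fun y hy => heq y hy ▸ hasSum_qDiffEq_rhs hF hG hq a b c hy) n
  rw [← h]
  field_simp
  ring

lemma qPoch_succ (q a : ℂ) (n : ℕ) : qPoch q a (n + 1) = qPoch q a n * (1 - a * q ^ n) :=
  Finset.prod_range_succ _ _

lemma qPoch_ne_zero {q a : ℂ} (h : ∀ j : ℕ, a * q ^ j ≠ 1) (n : ℕ) : qPoch q a n ≠ 0 :=
  Finset.prod_ne_zero_iff.mpr fun j _ => sub_ne_zero.mpr (h j).symm

lemma qPoch_self_ne_zero {q : ℂ} (hq : ‖q‖ < 1) (n : ℕ) : qPoch q q n ≠ 0 :=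
  qPoch_ne_zero (fun j h => (pow_lt_one₀ (norm_nonneg q) hq j.succ_ne_zero).ne <| by
    rw [← norm_pow, pow_succ', h, norm_one]) n

lemma iterate_qDeriv_succ (q : ℂ) (g : ℂ → ℂ) (n : ℕ) (x : ℂ) :
    (qDeriv q)^[n + 1] g x = ((qDeriv q)^[n] g x - (qDeriv q)^[n] g (q * x)) / x := by
  rw [Function.iterate_succ_apply']
  rfl

lemma eq_qPoch_mul_iterate_qDeriv {q a b c d e : ℂ} {A : ℕ → ℂ → ℂ} {g : ℂ → ℂ} {s : Set ℂ}
    (hq0 : q ≠ 0) (hs : ∀ x ∈ s, q * x ∈ s) (hQ : ∀ n, qPoch q q n ≠ 0)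
    (hd : ∀ n, qPoch q d n ≠ 0) (he : ∀ n, qPoch q e n ≠ 0) (hA0 : ∀ x ∈ s, A 0 x = g x)
    (hrec : ∀ x ∈ s, ∀ n,
      x * A (n + 1) x * ((1 - q * q ^ n) * (1 - d * q ^ n) * (1 - e * q ^ n))
        = (A n x - A n (q * x)) * ((1 - a * q ^ n) * (1 - b * q ^ n) * (1 - c * q ^ n)))
    (n : ℕ) {x : ℂ} (hx : x ∈ s) (hx0 : x ≠ 0) :
    A n x = (qPoch q a n * qPoch q b n * qPoch q c n) /
      (qPoch q q n * qPoch q d n * qPoch q e n) * (qDeriv q)^[n] g x := by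
  induction n generalizing x with
  | zero => simp [qPoch, hA0 x hx]
  | succ n ih =>
    have hF : (1 - q * q ^ n) * (1 - d * q ^ n) * (1 - e * q ^ n) ≠ 0 :=
      mul_ne_zero (mul_ne_zero (right_ne_zero_of_mul (qPoch_succ q q n ▸ hQ (n + 1)))
        (right_ne_zero_of_mul (qPoch_succ q d n ▸ hd (n + 1))))
        (right_ne_zero_of_mul (qPoch_succ q e n ▸ he (n + 1)))
    have hstep : A (n + 1) x = (A n x - A n (q * x)) / x *
        (((1 - a * q ^ n) * (1 - b * q ^ n) * (1 - c * q ^ n)) /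
          ((1 - q * q ^ n) * (1 - d * q ^ n) * (1 - e * q ^ n))) := by
      rw [div_mul_div_comm, eq_div_iff (mul_ne_zero hx0 hF)]
      linear_combination hrec x hx n
    rw [hstep, ih hx hx0, ih (hs x hx) (mul_ne_zero hq0 hx0), iterate_qDeriv_succ, qPoch_succ,
      qPoch_succ, qPoch_succ, qPoch_succ, qPoch_succ, qPoch_succ]
    simp only [div_eq_mul_inv, mul_inv]
    ring

lemma exists_coeff_hasSum_of_differentiableOn {f : ℂ × ℂ → ℂ} {R : ℝ≥0} (hR : 0 < R)
    (hf : DifferentiableOn ℂ f (closedBall ((0 : ℂ), (0 : ℂ)) R)) :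
    ∃ A : ℕ → ℂ → ℂ, ∀ x ∈ closedBall (0 : ℂ) R,
      A 0 x = f (x, 0) ∧ ∀ y : ℂ, ‖y‖ < R → HasSum (fun n => A n x * y ^ n) (f (x, y)) := by
  refine ⟨fun n x => (cauchyPowerSeries (fun y => f (x, y)) 0 R).coeff n, fun x hx => ?_⟩
  have hslice : DifferentiableOn ℂ (fun y => f (x, y)) (closedBall 0 R) :=
    hf.comp ((differentiableOn_const x).prodMk differentiableOn_id) fun y hy => by
      rw [← closedBall_prod_same]
      exact ⟨hx, hy⟩
  have hps := hslice.hasFPowerSeriesOnBall hR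
  refine ⟨by simpa using hps.coeff_zero 1, fun y hy => ?_⟩
  simpa [apply_eq_pow_smul_coeff, mul_comm] using hps.hasSum (by simpa [eball_coe] using hy)

/-- a solution of the first generalized q-difference equation is
represented by the operator T(a,b,c,d,e,yD_x) applied to f(x,0). -/
theorem stmt2 (q : ℝ) (hq0 : 0 < q) (hq1 : q < 1)
    (a b c d e : ℂ)
    (hd : ∀ j : ℕ, d ≠ (((q : ℂ)) ^ j)⁻¹) (he : ∀ j : ℕ, e ≠ (((q : ℂ)) ^ j)⁻¹)
    (f : ℂ × ℂ → ℂ) (U : Set (ℂ × ℂ)) (hU : U ∈ nhds ((0 : ℂ), (0 : ℂ)))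
    (hf : AnalyticOnNhd ℂ f U)
    (heq : ∀ x y : ℂ, (x, y) ∈ U →
      x * ((f (x, y) - f (x, (q : ℂ) * y))
        - (d + e) * ((q : ℂ))⁻¹ * (f (x, (q : ℂ) * y) - f (x, (q : ℂ) ^ 2 * y))
        + d * e * (((q : ℂ))⁻¹) ^ 2 * (f (x, (q : ℂ) ^ 2 * y) - f (x, (q : ℂ) ^ 3 * y)))
      = y * ((f (x, y) - f ((q : ℂ) * x, y))
        - (a + b + c) * (f (x, (q : ℂ) * y) - f ((q : ℂ) * x, (q : ℂ) * y))
        + (a * b + a * c + b * c) *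
            (f (x, (q : ℂ) ^ 2 * y) - f ((q : ℂ) * x, (q : ℂ) ^ 2 * y))
        - a * b * c * (f (x, (q : ℂ) ^ 3 * y) - f ((q : ℂ) * x, (q : ℂ) ^ 3 * y))))
    (g : ℂ → ℂ) (hg : ∀ x : ℂ, g x = f (x, 0)) :
    ∃ V : Set (ℂ × ℂ), V ∈ nhds ((0 : ℂ), (0 : ℂ)) ∧ V ⊆ U ∧
      ∀ x y : ℂ, (x, y) ∈ V → x ≠ 0 →
        HasSum (fun n : ℕ =>
          (qPoch (q : ℂ) a n * qPoch (q : ℂ) b n * qPoch (q : ℂ) c n) /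
            (qPoch (q : ℂ) (q : ℂ) n * qPoch (q : ℂ) d n * qPoch (q : ℂ) e n) *
          y ^ n * ((qDeriv (q : ℂ))^[n] g x)) (f (x, y)) := by
  obtain ⟨R, hR, hRU⟩ := nhds_basis_closedBall.mem_iff.mp hU
  lift R to ℝ≥0 using hR.le
  have hR' : 0 < R := by exact_mod_cast hR
  obtain ⟨A, hA⟩ := exists_coeff_hasSum_of_differentiableOn hR' (hf.differentiableOn.mono hRU)
  have hq : ‖(q : ℂ)‖ < 1 := by rwa [Complex.norm_real, Real.norm_of_nonneg hq0.le]
  have hqx : ∀ x ∈ closedBall (0 : ℂ) R, (q : ℂ) * x ∈ closedBall (0 : ℂ) R := fun x hx => by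
    rw [mem_closedBall_zero_iff] at hx ⊢
    rw [norm_mul]
    exact (mul_le_of_le_one_left (norm_nonneg x) hq.le).trans hx
  have hcoeff := eq_qPoch_mul_iterate_qDeriv (mod_cast hq0.ne') hqx (qPoch_self_ne_zero hq)
    (qPoch_ne_zero fun j h => hd j (eq_inv_of_mul_eq_one_left h))
    (qPoch_ne_zero fun j h => he j (eq_inv_of_mul_eq_one_left h))
    (fun x hx => (hA x hx).1.trans (hg x).symm)
    fun x hx n => coeff_succ_recurrence hR' (mod_cast hq0.ne') hq.le (hA x hx).2 (hA _ (hqx x hx)).2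
      (fun y hy => heq x y <| hRU <| by
        rw [← closedBall_prod_same]
        exact ⟨hx, mem_closedBall_zero_iff.mpr hy.le⟩) n
  refine ⟨ball (0, 0) R, ball_mem_nhds _ hR, ball_subset_closedBall.trans hRU,
    fun x y hxy hx0 => ?_⟩
  rw [← ball_prod_same, Set.mem_prod] at hxy
  have hx := ball_subset_closedBall hxy.1
  refine ((hA x hx).2 y (mem_ball_zero_iff.mp hxy.2)).congr_fun fun n => ?_
  rw [hcoeff n hx hx0]
  ring
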